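/- arXiv:0811.0802 — 2 statements merged into one kernel-verified Lean document; each statement's English description precedes it below -/
import Mathlib

section
/- Closed-form expression for the leave-p-out risk estimator of a projection estimator: with contrast γ(t,x) = ‖t‖₂² − 2t(x) and projection estimator ŝ_m^{ē} = (1/(n-p)) ∑_{j ∈ ē} ∑_{λ ∈ Λ(m)} φ_λ(X_j) φ_λ computed from the training indices ē, the Lpo estimator R̂_p(m) = binomial(n,p)^{-1} ∑_{e ∈ E_p} [‖ŝ_m^{ē}‖₂² − (2/p) ∑_{i ∈ e} ŝ_m^{ē}(X_i)] equals (1/(n(n-p))) ∑_{λ ∈ Λ(m)} [∑_{j=1}^n φ_λ(X_j)² − ((n-p+1)/(n-1)) ∑_{j ≠ k} φ_λ(X_j) φ_λ(X_k)]. -/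
/-!
Orthonormality turns both the squared norm and the evaluations of the projection estimator into
sums over `λ` of the same expression in the numbers `a j = φ λ (X j)`, so it suffices to treat a
single coordinate. There, with `B e = ∑ j ∉ e, a j` and `S = ∑ j, a j`, the cross term
`∑ i ∈ e, a i * B e` is `(S - B e) * B e`, and averaging `B e` and `B e ^ 2` over the `p`-subsets
`e` only needs the number of them avoiding one index, `(n - 1).choose p`, or two indices,
`(n - 2).choose p`.
-/

open MeasureTheory intervalIntegral
open scoped Classical
open Finset

section Counting
variable {α : Type*} [Fintype α] [DecidableEq α]

theorem card_filter_disjoint_powersetCard_univ (p : ℕ) (t : Finset α) :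
    #{e ∈ powersetCard p (univ : Finset α) | Disjoint e t} = (Fintype.card α - #t).choose p := by
  have : {e ∈ powersetCard p (univ : Finset α) | Disjoint e t} = powersetCard p tᶜ := by
    ext e; simp [subset_compl_iff_disjoint_right, and_comm]
  rw [this, card_powersetCard, card_compl]

theorem sum_powersetCard_ite_disjoint {M : Type*} [AddCommMonoid M] (p : ℕ) (t : Finset α)
    (x : M) :
    ∑ e ∈ powersetCard p univ, (if Disjoint e t then x else 0)
      = (Fintype.card α - #t).choose p • x := by
  rw [← sum_filter, sum_const, card_filter_disjoint_powersetCard_univ]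

theorem sum_powersetCard_sum_compl {M : Type*} [AddCommMonoid M] (p : ℕ) (f : α → M) :
    ∑ e ∈ powersetCard p univ, ∑ j ∈ eᶜ, f j = (Fintype.card α - 1).choose p • ∑ j, f j := by
  have hcompl (e : Finset α) : ∑ j ∈ eᶜ, f j = ∑ j, if Disjoint e {j} then f j else 0 := by
    simp only [disjoint_singleton_right, ← mem_compl, Fintype.sum_ite_mem]
  simp only [hcompl, sum_comm (s := powersetCard p univ), sum_powersetCard_ite_disjoint,
    card_singleton, smul_sum]

theorem sum_powersetCard_sq_sum_compl {R : Type*} [CommSemiring R] (p : ℕ) (a : α → R) :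
    ∑ e ∈ powersetCard p univ, (∑ j ∈ eᶜ, a j) ^ 2
      = (Fintype.card α - 1).choose p • ∑ j, a j ^ 2
        + (Fintype.card α - 2).choose p • ∑ j, ∑ k, if j ≠ k then a j * a k else 0 := by
  have hsq (e : Finset α) :
      (∑ j ∈ eᶜ, a j) ^ 2 = ∑ j, ∑ k, if Disjoint e {j, k} then a j * a k else 0 := by
    have h (j k : α) : Disjoint e {j, k} ↔ j ∈ eᶜ ∧ k ∈ eᶜ := by simp
    rw [sq, sum_mul_sum]
    simp only [h, ite_and, sum_ite_irrel, sum_const_zero, Fintype.sum_ite_mem]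
  have hsplit (j k : α) : (Fintype.card α - #{j, k}).choose p • (a j * a k)
      = (if j = k then (Fintype.card α - 1).choose p • a j ^ 2 else 0)
        + (Fintype.card α - 2).choose p • (if j ≠ k then a j * a k else 0) := by
    by_cases h : j = k
    · simp [h, sq]
    · simp [h, card_pair h]
  simp only [hsq, sum_comm (s := powersetCard p univ), sum_powersetCard_ite_disjoint, hsplit,
    sum_add_distrib, sum_ite_eq, mem_univ, if_true, smul_sum]

theorem sq_sum_eq_sum_sq_add_sum_ne {R : Type*} [CommSemiring R] (a : α → R) :
    (∑ j, a j) ^ 2 = ∑ j, a j ^ 2 + ∑ j, ∑ k, if j ≠ k then a j * a k else 0 := by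
  simpa using sum_powersetCard_sq_sum_compl 0 a

end Counting

theorem Nat.cast_choose_pred_eq {K : Type*} [Field K] [CharZero K] {N p : ℕ} (hpN : p ≤ N)
    (hN : N ≠ 0) : ((N - 1).choose p : K) = N.choose p * (N - p) / N := by
  obtain ⟨m, rfl⟩ := Nat.exists_eq_succ_of_ne_zero hN
  rw [eq_div_iff (by positivity), ← Nat.cast_sub hpN]
  exact_mod_cast Nat.choose_mul_succ_eq m p

theorem lpo_closed_form_one_dim {α : Type*} [Fintype α] [DecidableEq α] (p : ℕ) (hp1 : 1 ≤ p)
    (hp2 : p ≤ Fintype.card α - 1) (a : α → ℝ) :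
    ((Fintype.card α).choose p : ℝ)⁻¹ *
      ∑ e ∈ powersetCard p univ,
        ((1 / ((Fintype.card α : ℝ) - p) * ∑ j ∈ eᶜ, a j) ^ 2
          - (2 / (p : ℝ)) * ∑ i ∈ e, 1 / ((Fintype.card α : ℝ) - p) * ∑ j ∈ eᶜ, a j * a i)
    = 1 / ((Fintype.card α : ℝ) * ((Fintype.card α : ℝ) - p)) *
        (∑ j, a j ^ 2 - (((Fintype.card α : ℝ) - p + 1) / ((Fintype.card α : ℝ) - 1)) *
          ∑ j, ∑ k, if j ≠ k then a j * a k else 0) := by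
  set N := Fintype.card α with hN
  set c : ℝ := 1 / ((N : ℝ) - p) with hc
  have hterm (e : Finset α) :
      (c * ∑ j ∈ eᶜ, a j) ^ 2 - (2 / (p : ℝ)) * ∑ i ∈ e, c * ∑ j ∈ eᶜ, a j * a i
        = (c ^ 2 + 2 * c / p) * (∑ j ∈ eᶜ, a j) ^ 2
          - 2 * c / p * (∑ j, a j) * ∑ j ∈ eᶜ, a j := by
    rw [← mul_sum, ← sum_compl_add_sum e a]
    simp only [← sum_mul, ← mul_sum]
    ring
  have hN0 : (N : ℝ) ≠ 0 := Nat.cast_ne_zero.mpr (by omega)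
  have hN1 : (N : ℝ) - 1 ≠ 0 := by
    rw [sub_ne_zero]; norm_cast; omega
  have hNp : (N : ℝ) - p ≠ 0 := by
    rw [sub_ne_zero]; norm_cast; omega
  have hC0 : (N.choose p : ℝ) ≠ 0 := by
    have := Nat.choose_pos (show p ≤ N by omega); positivity
  have hC1 : ((N - 1).choose p : ℝ) = N.choose p * (N - p) / N :=
    Nat.cast_choose_pred_eq (by omega) (by omega)
  have hC2 : ((N - 1 - 1).choose p : ℝ) = (N - 1).choose p * ((N - 1 : ℕ) - p) / (N - 1 : ℕ) :=
    Nat.cast_choose_pred_eq (by omega) (by omega)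
  have hQ : ∑ j, a j ^ 2 = (∑ j, a j) ^ 2 - ∑ j, ∑ k, if j ≠ k then a j * a k else 0 := by
    rw [sq_sum_eq_sum_sq_add_sum_ne]; ring
  simp only [hterm]
  simp only [sum_sub_distrib, ← mul_sum]
  rw [sum_powersetCard_sq_sum_compl, sum_powersetCard_sum_compl]
  simp only [nsmul_eq_mul, ← hN]
  rw [show N - 2 = N - 1 - 1 by omega, hC2, hC1, Nat.cast_sub (by omega), Nat.cast_one, hQ, hc]
  field_simp
  ring

theorem integral_sq_sum_orthonormal {Λ : Type*} [Fintype Λ] {μ : Measure ℝ} {x y : ℝ}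
    (φ : Λ → ℝ → ℝ) (hint : ∀ l l' : Λ, IntervalIntegrable (fun t => φ l t * φ l' t) μ x y)
    (horth : ∀ l l' : Λ, ∫ t in x..y, φ l t * φ l' t ∂μ = if l = l' then 1 else 0)
    (b : Λ → ℝ) :
    ∫ t in x..y, (∑ l, b l * φ l t) ^ 2 ∂μ = ∑ l, b l ^ 2 := by
  have hexpand (t : ℝ) :
      (∑ l, b l * φ l t) ^ 2 = ∑ l, ∑ l', b l * b l' * (φ l t * φ l' t) := by
    rw [sq, sum_mul_sum]
    exact sum_congr rfl fun l _ => sum_congr rfl fun l' _ => by ring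
  simp_rw [hexpand]
  rw [intervalIntegral.integral_finsetSum fun l _ => by
    simpa only [Finset.sum_fn] using
      IntervalIntegrable.sum univ fun l' _ => (hint l l').const_mul (b l * b l')]
  simp_rw [intervalIntegral.integral_finsetSum fun l' _ => (hint _ l').const_mul _,
    intervalIntegral.integral_const_mul, horth]
  simp [sq]

theorem lpo_closed_form_general (n p : ℕ) (hp1 : 1 ≤ p) (hp2 : p ≤ n - 1)
    (X : Fin n → ℝ)
    (Λ : Type*) [Fintype Λ] (φ : Λ → ℝ → ℝ)
    (hint : ∀ l l' : Λ, IntervalIntegrable (fun t => φ l t * φ l' t) volume 0 1)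
    (horth : ∀ l l' : Λ,
      ∫ t in (0:ℝ)..1, φ l t * φ l' t = if l = l' then 1 else 0) :
    (n.choose p : ℝ)⁻¹ *
      ∑ e ∈ Finset.powersetCard p (Finset.univ : Finset (Fin n)),
        ((∫ t in (0:ℝ)..1,
            ((1 / ((n:ℝ) - p)) * ∑ j ∈ eᶜ, ∑ l, φ l (X j) * φ l t) ^ 2)
          - (2 / (p:ℝ)) * ∑ i ∈ e,
              (1 / ((n:ℝ) - p)) * ∑ j ∈ eᶜ, ∑ l, φ l (X j) * φ l (X i))
    = (1 / ((n:ℝ) * ((n:ℝ) - p))) *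
        ∑ l, ((∑ j, φ l (X j) ^ 2)
          - (((n:ℝ) - p + 1) / ((n:ℝ) - 1)) *
              ∑ j, ∑ k, if j ≠ k then φ l (X j) * φ l (X k) else 0) := by
  set c : ℝ := 1 / ((n:ℝ) - p)
  have hterm (e : Finset (Fin n)) :
      (∫ t in (0:ℝ)..1, (c * ∑ j ∈ eᶜ, ∑ l, φ l (X j) * φ l t) ^ 2)
        - (2 / (p:ℝ)) * ∑ i ∈ e, c * ∑ j ∈ eᶜ, ∑ l, φ l (X j) * φ l (X i)
      = ∑ l, ((c * ∑ j ∈ eᶜ, φ l (X j)) ^ 2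
        - (2 / (p:ℝ)) * ∑ i ∈ e, c * ∑ j ∈ eᶜ, φ l (X j) * φ l (X i)) := by
    have hcoord (t : ℝ) : c * ∑ j ∈ eᶜ, ∑ l, φ l (X j) * φ l t
        = ∑ l, (c * ∑ j ∈ eᶜ, φ l (X j)) * φ l t := by
      simp only [mul_sum, sum_mul, mul_assoc]
      exact sum_comm
    rw [sum_sub_distrib]
    congr 1
    · simp_rw [hcoord]
      exact integral_sq_sum_orthonormal φ hint horth _
    · rw [← mul_sum]
      simp_rw [sum_comm (s := eᶜ), mul_sum]
      exact sum_comm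
  simp only [hterm]
  rw [sum_comm, mul_sum, mul_sum]
  refine sum_congr rfl fun l _ => ?_
  have h := lpo_closed_form_one_dim p hp1 (by simpa using hp2) (fun j => φ l (X j))
  simpa only [Fintype.card_fin] using h

/-- Proposition 1: closed-form expression of the leave-p-out risk estimator for a
projection estimator associated with a finite orthonormal family `{φ_λ}` of
`L²([0,1])`. Here `ŝ_m^{ē}(t) = (1/(n-p)) ∑_{j ∈ ē} ∑_λ φ_λ(X_j) φ_λ(t)` and the
Lpo estimator `binom(n,p)⁻¹ ∑_e [‖ŝ_m^{ē}‖₂² − (2/p) ∑_{i ∈ e} ŝ_m^{ē}(X_i)]` equals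
`(1/(n(n-p))) ∑_λ [∑_j φ_λ(X_j)² − ((n-p+1)/(n-1)) ∑_{j≠k} φ_λ(X_j)φ_λ(X_k)]`. -/
theorem lpo_closed_form (n p : ℕ) (hn : 2 ≤ n) (hp1 : 1 ≤ p) (hp2 : p ≤ n - 1)
    (X : Fin n → ℝ) (hX : ∀ i, X i ∈ Set.Icc (0:ℝ) 1)
    (Λ : Type*) [Fintype Λ] (φ : Λ → ℝ → ℝ)
    (hint : ∀ l l' : Λ, IntervalIntegrable (fun t => φ l t * φ l' t) volume 0 1)
    (horth : ∀ l l' : Λ,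
      ∫ t in (0:ℝ)..1, φ l t * φ l' t = if l = l' then 1 else 0) :
    (n.choose p : ℝ)⁻¹ *
      ∑ e ∈ Finset.powersetCard p (Finset.univ : Finset (Fin n)),
        ((∫ t in (0:ℝ)..1,
            ((1 / ((n:ℝ) - p)) * ∑ j ∈ eᶜ, ∑ l, φ l (X j) * φ l t) ^ 2)
          - (2 / (p:ℝ)) * ∑ i ∈ e,
              (1 / ((n:ℝ) - p)) * ∑ j ∈ eᶜ, ∑ l, φ l (X j) * φ l (X i))
    = (1 / ((n:ℝ) * ((n:ℝ) - p))) *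
        ∑ l, ((∑ j, φ l (X j) ^ 2)
          - (((n:ℝ) - p + 1) / ((n:ℝ) - 1)) *
              ∑ j, ∑ k, if j ≠ k then φ l (X j) * φ l (X k) else 0) :=
  lpo_closed_form_general n p hp1 hp2 X Λ φ hint horth
end

section
/- Bias of the leave-p-out estimator is nonnegative and given by B[R̂_p(m)] := E[R̂_p(m)] − r_n(m) = (p/(n(n-p))) ∑_{λ ∈ Λ(m)} Var[φ_λ(X)] ≥ 0, where r_n(m) = E[‖ŝ_m‖₂² − 2∫_{[0,1]} s·ŝ_m] = (1/n) ∑_λ Var[φ_λ(X)] − ∑_λ (E φ_λ(X))². -/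
open MeasureTheory ProbabilityTheory
open scoped Classical

/-!
Under the common law `P`, each `φ_λ(X_j)²` has mean `∫ φ_λ² ∂P`, and by independence each cross
product `φ_λ(X_j) φ_λ(X_k)` with `j ≠ k` has mean `(∫ φ_λ ∂P)²`. Hence the expected leave-`p`-out
criterion is `(1/(n-p)) ∑_λ (∫ φ_λ² ∂P - (n-p+1) (∫ φ_λ ∂P)²)`, and subtracting the risk `r_n(m)`
leaves `p/(n(n-p))` times a sum of variances.
-/

namespace LeavePOut

variable {Ω ι : Type*} [MeasurableSpace Ω] {μ : Measure Ω} {P : Measure ℝ} {f : ℝ → ℝ}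

lemma integral_comp_of_map_eq {Y : Ω → ℝ} (hY : AEMeasurable Y μ) (hYP : μ.map Y = P)
    {g : ℝ → ℝ} (hg : AEStronglyMeasurable g P) :
    ∫ ω, g (Y ω) ∂μ = ∫ x, g x ∂P := by
  subst hYP
  exact (integral_map hY hg).symm

lemma memLp_comp_of_map_eq {Y : Ω → ℝ} (hY : AEMeasurable Y μ) (hYP : μ.map Y = P)
    {p : ENNReal} (hf : MemLp f p P) : MemLp (fun ω => f (Y ω)) p μ := by
  subst hYP
  exact (memLp_map_measure_iff hf.1 hY).1 hf

lemma integral_mul_comp_of_indepFun {Y Z : Ω → ℝ} (hYZ : IndepFun Y Z μ)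
    (hY : AEMeasurable Y μ) (hZ : AEMeasurable Z μ) (hYP : μ.map Y = P) (hZP : μ.map Z = P)
    (hf : AEStronglyMeasurable f P) :
    ∫ ω, f (Y ω) * f (Z ω) ∂μ = (∫ x, f x ∂P) ^ 2 := by
  rw [hYZ.integral_fun_comp_mul_comp hY hZ (hYP ▸ hf) (hZP ▸ hf),
    integral_comp_of_map_eq hY hYP hf, integral_comp_of_map_eq hZ hZP hf, sq]

variable {X : ι → Ω → ℝ}

lemma integrable_offDiag_mul_comp [DecidableEq ι] (hX : ∀ i, AEMeasurable (X i) μ)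
    (hXP : ∀ i, μ.map (X i) = P) (hf : MemLp f 2 P) (i j : ι) :
    Integrable (fun ω => if i ≠ j then f (X i ω) * f (X j ω) else 0) μ := by
  split_ifs
  · exact (memLp_comp_of_map_eq (hX i) (hXP i) hf).integrable_mul
      (memLp_comp_of_map_eq (hX j) (hXP j) hf)
  · exact integrable_zero _ _ _

variable [Fintype ι]

lemma integrable_sum_sq_comp (hX : ∀ i, AEMeasurable (X i) μ) (hXP : ∀ i, μ.map (X i) = P)
    (hf : MemLp f 2 P) : Integrable (fun ω => ∑ i, f (X i ω) ^ 2) μ :=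
  integrable_finsetSum _ fun i _ => (memLp_comp_of_map_eq (hX i) (hXP i) hf).integrable_sq

lemma integrable_sum_offDiag_mul_comp [DecidableEq ι] (hX : ∀ i, AEMeasurable (X i) μ)
    (hXP : ∀ i, μ.map (X i) = P) (hf : MemLp f 2 P) :
    Integrable (fun ω => ∑ i, ∑ j, if i ≠ j then f (X i ω) * f (X j ω) else 0) μ :=
  integrable_finsetSum _ fun i _ => integrable_finsetSum _ fun j _ =>
    integrable_offDiag_mul_comp hX hXP hf i j

lemma integral_sum_sq_comp (hX : ∀ i, AEMeasurable (X i) μ) (hXP : ∀ i, μ.map (X i) = P)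
    (hf : MemLp f 2 P) :
    ∫ ω, ∑ i, f (X i ω) ^ 2 ∂μ = Fintype.card ι * ∫ x, f x ^ 2 ∂P := by
  have h_term (i : ι) : ∫ ω, f (X i ω) ^ 2 ∂μ = ∫ x, f x ^ 2 ∂P :=
    integral_comp_of_map_eq (hX i) (hXP i) (g := fun x => f x ^ 2) (hf.1.pow 2)
  rw [integral_finsetSum _ fun i _ => (memLp_comp_of_map_eq (hX i) (hXP i) hf).integrable_sq]
  simp only [h_term, Finset.sum_const, Finset.card_univ, nsmul_eq_mul]

lemma integral_sum_offDiag_mul_comp [DecidableEq ι] (hX : ∀ i, AEMeasurable (X i) μ)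
    (hXP : ∀ i, μ.map (X i) = P) (hf : MemLp f 2 P) (hindep : iIndepFun X μ) :
    ∫ ω, ∑ i, ∑ j, (if i ≠ j then f (X i ω) * f (X j ω) else 0) ∂μ
      = Fintype.card ι * (Fintype.card ι - 1) * (∫ x, f x ∂P) ^ 2 := by
  have h_term (i j : ι) : ∫ ω, (if i ≠ j then f (X i ω) * f (X j ω) else 0) ∂μ
      = (∫ x, f x ∂P) ^ 2 - if i = j then (∫ x, f x ∂P) ^ 2 else 0 := by
    by_cases hij : i = j
    · simp [hij]
    · simp only [hij, ne_eq, not_false_eq_true, if_true, if_false, sub_zero]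
      exact integral_mul_comp_of_indepFun (hindep.indepFun hij) (hX i) (hX j) (hXP i) (hXP j) hf.1
  have h_int := integrable_offDiag_mul_comp hX hXP hf
  rw [integral_finsetSum _ fun i _ => integrable_finsetSum _ fun j _ => h_int i j]
  simp only [integral_finsetSum _ fun j _ => h_int _ j, h_term, Finset.sum_sub_distrib,
    Finset.sum_ite_eq, Finset.mem_univ, if_true, Finset.sum_const, Finset.card_univ, nsmul_eq_mul]
  ring

lemma integrable_sum_sq_sub_mul_sum_offDiag [DecidableEq ι] (hX : ∀ i, AEMeasurable (X i) μ)
    (hXP : ∀ i, μ.map (X i) = P) (hf : MemLp f 2 P) (c : ℝ) :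
    Integrable (fun ω => ∑ i, f (X i ω) ^ 2
      - c * ∑ i, ∑ j, if i ≠ j then f (X i ω) * f (X j ω) else 0) μ :=
  (integrable_sum_sq_comp hX hXP hf).sub ((integrable_sum_offDiag_mul_comp hX hXP hf).const_mul c)

lemma integral_sum_sq_sub_mul_sum_offDiag [DecidableEq ι] (hX : ∀ i, AEMeasurable (X i) μ)
    (hXP : ∀ i, μ.map (X i) = P) (hf : MemLp f 2 P) (hindep : iIndepFun X μ) (c : ℝ) :
    ∫ ω, (∑ i, f (X i ω) ^ 2 - c * ∑ i, ∑ j, if i ≠ j then f (X i ω) * f (X j ω) else 0) ∂μ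
      = Fintype.card ι * ∫ x, f x ^ 2 ∂P
        - c * (Fintype.card ι * (Fintype.card ι - 1) * (∫ x, f x ∂P) ^ 2) := by
  rw [integral_sub (integrable_sum_sq_comp hX hXP hf)
      ((integrable_sum_offDiag_mul_comp hX hXP hf).const_mul c),
    integral_const_mul, integral_sum_sq_comp hX hXP hf,
    integral_sum_offDiag_mul_comp hX hXP hf hindep]

end LeavePOut

open LeavePOut in
theorem lpo_bias_nonneg_general (n p : ℕ) (hn : 2 ≤ n) (hp2 : p ≤ n - 1)
    {Ω : Type*} [MeasurableSpace Ω] (μ : Measure Ω) [IsProbabilityMeasure μ]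
    (X : Fin n → Ω → ℝ) (hmeas : ∀ i, Measurable (X i))
    (hindep : iIndepFun X μ)
    (P : Measure ℝ) (hP : ∀ i, μ.map (X i) = P)
    (Λ : Type*) [Fintype Λ] (φ : Λ → ℝ → ℝ)
    (hφm : ∀ l, Measurable (φ l)) (hφb : ∀ l, ∃ C, ∀ x, |φ l x| ≤ C) :
    (∫ ω, (1 / ((n:ℝ) * ((n:ℝ) - p))) *
          ∑ l, ((∑ j, φ l (X j ω) ^ 2)
            - (((n:ℝ) - p + 1) / ((n:ℝ) - 1)) *
                ∑ j, ∑ k, if j ≠ k then φ l (X j ω) * φ l (X k ω) else 0) ∂μ)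
        - ((1 / (n:ℝ)) *
              ∑ l, ((∫ x, φ l x ^ 2 ∂P) - (∫ x, φ l x ∂P) ^ 2)
            - ∑ l, (∫ x, φ l x ∂P) ^ 2)
      = ((p:ℝ) / ((n:ℝ) * ((n:ℝ) - p))) *
          ∑ l, ((∫ x, φ l x ^ 2 ∂P) - (∫ x, φ l x ∂P) ^ 2)
    ∧ 0 ≤ ((p:ℝ) / ((n:ℝ) * ((n:ℝ) - p))) *
          ∑ l, ((∫ x, φ l x ^ 2 ∂P) - (∫ x, φ l x ∂P) ^ 2) := by
  have hX (i : Fin n) : AEMeasurable (X i) μ := (hmeas i).aemeasurable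
  have : IsProbabilityMeasure P := hP ⟨0, by omega⟩ ▸ Measure.isProbabilityMeasure_map (hX _)
  have hφ (l : Λ) : MemLp (φ l) 2 P := by
    obtain ⟨C, hC⟩ := hφb l
    exact .of_bound (hφm l).aestronglyMeasurable C (ae_of_all _ hC)
  have hn1 : (1 : ℝ) < n := by exact_mod_cast hn
  have hpn : (p : ℝ) < n := by exact_mod_cast (show p < n by omega)
  have hn1_ne : (n : ℝ) - 1 ≠ 0 := (sub_pos.2 hn1).ne'
  have hpn_ne : (n : ℝ) - p ≠ 0 := (sub_pos.2 hpn).ne'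
  rw [integral_const_mul, integral_finsetSum _ fun l _ =>
    integrable_sum_sq_sub_mul_sum_offDiag hX hP (hφ l) _]
  simp only [integral_sum_sq_sub_mul_sum_offDiag hX hP (hφ _) hindep, Fintype.card_fin]
  refine ⟨?_, ?_⟩
  · rw [Finset.mul_sum, Finset.mul_sum, Finset.mul_sum, ← Finset.sum_sub_distrib,
      ← Finset.sum_sub_distrib]
    refine Finset.sum_congr rfl fun l _ => ?_
    field_simp
    ring
  · have h_var (l : Λ) : (∫ x, φ l x ^ 2 ∂P) - (∫ x, φ l x ∂P) ^ 2 = variance (φ l) P := by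
      simp [variance_eq_sub (hφ l)]
    simp only [h_var]
    exact mul_nonneg (by positivity) (Finset.sum_nonneg fun l _ => variance_nonneg _ _)

/-- Corollary 2: the bias of the leave-p-out risk estimator is
`B[R̂_p(m)] = E[R̂_p(m)] − r_n(m) = (p/(n(n-p))) ∑_λ Var[φ_λ(X)] ≥ 0`, where
`r_n(m) = (1/n) ∑_λ Var[φ_λ(X)] − ∑_λ (Eφ_λ(X))²` is the risk (up to a constant)
of the projection estimator. -/
theorem lpo_bias_nonneg (n p : ℕ) (hn : 2 ≤ n) (hp1 : 1 ≤ p) (hp2 : p ≤ n - 1)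
    {Ω : Type*} [MeasurableSpace Ω] (μ : Measure Ω) [IsProbabilityMeasure μ]
    (X : Fin n → Ω → ℝ) (hmeas : ∀ i, Measurable (X i))
    (hindep : iIndepFun X μ)
    (P : Measure ℝ) (hP : ∀ i, μ.map (X i) = P)
    (Λ : Type*) [Fintype Λ] (φ : Λ → ℝ → ℝ)
    (hφm : ∀ l, Measurable (φ l)) (hφb : ∀ l, ∃ C, ∀ x, |φ l x| ≤ C) :
    (∫ ω, (1 / ((n:ℝ) * ((n:ℝ) - p))) *
          ∑ l, ((∑ j, φ l (X j ω) ^ 2)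
            - (((n:ℝ) - p + 1) / ((n:ℝ) - 1)) *
                ∑ j, ∑ k, if j ≠ k then φ l (X j ω) * φ l (X k ω) else 0) ∂μ)
        - ((1 / (n:ℝ)) *
              ∑ l, ((∫ x, φ l x ^ 2 ∂P) - (∫ x, φ l x ∂P) ^ 2)
            - ∑ l, (∫ x, φ l x ∂P) ^ 2)
      = ((p:ℝ) / ((n:ℝ) * ((n:ℝ) - p))) *
          ∑ l, ((∫ x, φ l x ^ 2 ∂P) - (∫ x, φ l x ∂P) ^ 2)
    ∧ 0 ≤ ((p:ℝ) / ((n:ℝ) * ((n:ℝ) - p))) *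
          ∑ l, ((∫ x, φ l x ^ 2 ∂P) - (∫ x, φ l x ∂P) ^ 2) :=
  lpo_bias_nonneg_general n p hn hp2 μ X hmeas hindep P hP Λ φ hφm hφb
end
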